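/- arXiv:1409.6690 — 5 statements merged into one kernel-verified Lean document; each statement's English description precedes it below -/
import Mathlib

section
/- Suppose that for every real ε with 0 < ε < 1/2 there exists a distribution ξ₁^ε on A₁ such that for every action a₂ ∈ A₂ the pair (ξ₁^ε, a₂) satisfies the LimAvgPre condition at level ε. Let m be an integer with m ≥ 2 and |A₁| ≤ m. Then for every real ε with 0 < ε < δmin/m there exist an action a ∈ A₁ and a distribution ξ on A₁ with ξ(a) ≥ 1 − ε·δmin such that for every a₂ ∈ A₂ the pair (ξ, a₂) satisfies the LimAvgPre condition at level ε. (Paper's Lemma: one action with large probability for the LimAvgPre operator.) -/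
open Finset

/-- `ξ` is a probability distribution on the finite action set `A1`. -/
def IsDist {A1 : Type*} [Fintype A1] (ξ : A1 → ℝ) : Prop :=
  (∀ a, 0 ≤ ξ a) ∧ ∑ a, ξ a = 1

/-- One-step probability `δ(ξ,a2)(T)` of reaching the set `T` of states. -/
def stepP {A1 A2 St : Type*} [Fintype A1]
    (δ : A1 → A2 → St → ℝ) (ξ : A1 → ℝ) (a2 : A2) (T : Finset St) : ℝ :=
  ∑ a1, ∑ t ∈ T, ξ a1 * δ a1 a2 t

/-- One-step expected reward `ExpRew(ξ,a2)`. -/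
def expRew {A1 A2 : Type*} [Fintype A1]
    (r : A1 → A2 → ℝ) (ξ : A1 → ℝ) (a2 : A2) : ℝ :=
  ∑ a1, ξ a1 * r a1 a2

/-- The pair `(ξ, a2)` satisfies the `LimAvgPre` condition at level `ε`
with respect to the nested sets `U ⊆ Y ⊆ Z ⊆ X ⊆ W`. -/
def LimAvgPreCond {A1 A2 St : Type*} [Fintype A1] [Fintype St] [DecidableEq St]
    (δ : A1 → A2 → St → ℝ) (r : A1 → A2 → ℝ)
    (W U X Y Z : Finset St) (ε : ℝ) (ξ : A1 → ℝ) (a2 : A2) : Prop :=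
  (stepP δ ξ a2 Wᶜ < ε * stepP δ ξ a2 U)
  ∨ (stepP δ ξ a2 X = 1 ∧ 0 < stepP δ ξ a2 Y)
  ∨ (stepP δ ξ a2 X = 1 ∧ 1 - ε ≤ expRew r ξ a2 ∧ 1 - ε ≤ stepP δ ξ a2 Z)

lemma stepP_eq' {A1 A2 St : Type*} [Fintype A1]
    (δ : A1 → A2 → St → ℝ) (ξ : A1 → ℝ) (a2 : A2) (T : Finset St) :
    stepP δ ξ a2 T = ∑ b, ξ b * ∑ t ∈ T, δ b a2 t := by
  simp [stepP, mul_sum]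

lemma stepP_mix' {A1 A2 St : Type*} [Fintype A1] [DecidableEq A1]
    (δ : A1 → A2 → St → ℝ) (ξ' : A1 → ℝ) (a : A1) (a2 : A2) (T : Finset St) (c d : ℝ) :
    stepP δ (fun b => c * (if b = a then 1 else 0) + d * ξ' b) a2 T
      = c * (∑ t ∈ T, δ a a2 t) + d * stepP δ ξ' a2 T := by
  rw [stepP_eq', stepP_eq']
  have : ∀ b : A1, ((c * if b = a then 1 else 0) + d * ξ' b) * ∑ t ∈ T, δ b a2 t
      = (if b = a then c * ∑ t ∈ T, δ b a2 t else 0) + d * (ξ' b * ∑ t ∈ T, δ b a2 t) := by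
    intro b; by_cases h : b = a <;> simp [h] <;> ring
  simp only [this, Finset.sum_add_distrib, Finset.sum_ite_eq' univ a
    (fun b => c * ∑ t ∈ T, δ b a2 t), mem_univ, if_true, ← Finset.mul_sum]

lemma expRew_mix' {A1 A2 : Type*} [Fintype A1] [DecidableEq A1]
    (r : A1 → A2 → ℝ) (ξ' : A1 → ℝ) (a : A1) (a2 : A2) (c d : ℝ) :
    expRew r (fun b => c * (if b = a then 1 else 0) + d * ξ' b) a2
      = c * r a a2 + d * expRew r ξ' a2 := by
  unfold expRew
  have : ∀ b : A1, ((c * if b = a then 1 else 0) + d * ξ' b) * r b a2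
      = (if b = a then c * r b a2 else 0) + d * (ξ' b * r b a2) := by
    intro b; by_cases h : b = a <;> simp [h] <;> ring
  simp only [this, Finset.sum_add_distrib, Finset.sum_ite_eq' univ a
    (fun b => c * r b a2), mem_univ, if_true, ← Finset.mul_sum]

set_option maxHeartbeats 2000000 in
/-- one action with large probability for the `LimAvgPre` operator. -/
theorem stmt_0 {A1 A2 St : Type*} [Fintype A1] [Fintype A2] [Fintype St]
    [DecidableEq St] [Nonempty A1] [Nonempty A2]
    (δ : A1 → A2 → St → ℝ) (r : A1 → A2 → ℝ) (δmin : ℝ)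
    (hδnn : ∀ a1 a2 t, 0 ≤ δ a1 a2 t)
    (hδsum : ∀ a1 a2, ∑ t, δ a1 a2 t = 1)
    (hr01 : ∀ a1 a2, r a1 a2 = 0 ∨ r a1 a2 = 1)
    (hδmin0 : 0 < δmin) (hδminle : δmin ≤ 1)
    (hδminlb : ∀ a1 a2 t, 0 < δ a1 a2 t → δmin ≤ δ a1 a2 t)
    (W U X Y Z : Finset St)
    (hUY : U ⊆ Y) (hYZ : Y ⊆ Z) (hZX : Z ⊆ X) (hXW : X ⊆ W)
    (m : ℕ) (hm : 2 ≤ m) (hcard : Fintype.card A1 ≤ m)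
    (hwit : ∀ ε : ℝ, 0 < ε → ε < 1/2 →
      ∃ ξ : A1 → ℝ, IsDist ξ ∧ ∀ a2, LimAvgPreCond δ r W U X Y Z ε ξ a2) :
    ∀ ε : ℝ, 0 < ε → ε < δmin / m →
      ∃ (a : A1) (ξ : A1 → ℝ), IsDist ξ ∧ 1 - ε * δmin ≤ ξ a ∧
        ∀ a2, LimAvgPreCond δ r W U X Y Z ε ξ a2 := by
  classical
  intro ε hε0 hεlt
  have hm0 : (0:ℝ) < m := by positivity
  have hm2 : (2:ℝ) ≤ m := by exact_mod_cast hm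
  have hdm : δmin / m ≤ 1 / m := by gcongr
  have hdm2 : (1:ℝ) / m ≤ 1 / 2 := by
    apply one_div_le_one_div_of_le (by norm_num) hm2
  have hεhalf : ε < 1/2 := lt_of_lt_of_le hεlt (hdm.trans hdm2)
  obtain ⟨ξ', ⟨hξ'nn, hξ'sum⟩, hcond'⟩ := hwit ε hε0 hεhalf
  -- pick the action of maximal probability
  obtain ⟨a, -, hamax⟩ := Finset.exists_max_image (univ : Finset A1) ξ' univ_nonempty
  have hcard0 : 0 < Fintype.card A1 := Fintype.card_pos
  have haLB : 1 / (m:ℝ) ≤ ξ' a := by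
    rw [div_le_iff₀ hm0]
    have h1 : (1:ℝ) = ∑ b, ξ' b := hξ'sum.symm
    have h2 : ∑ b, ξ' b ≤ ∑ _b : A1, ξ' a :=
      Finset.sum_le_sum (fun b _ => hamax b (mem_univ b))
    have h3 : ∑ _b : A1, ξ' a = (Fintype.card A1 : ℝ) * ξ' a := by
      rw [Finset.sum_const, Finset.card_univ, nsmul_eq_mul]
    have h4 : (Fintype.card A1 : ℝ) * ξ' a ≤ (m:ℝ) * ξ' a := by
      apply mul_le_mul_of_nonneg_right _ (hξ'nn a)
      exact_mod_cast hcard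
    calc (1:ℝ) = ∑ b, ξ' b := h1
      _ ≤ _ := h2
      _ = _ := h3
      _ ≤ _ := h4
      _ = ξ' a * m := mul_comm _ _
  have ha0 : 0 < ξ' a := lt_of_lt_of_le (by positivity) haLB
  set γ : ℝ := ε * δmin with hγdef
  have hγ0 : 0 < γ := by positivity
  have hγlt1 : γ < 1 := by
    have : ε < 1 := lt_trans hεhalf (by norm_num)
    calc γ = ε * δmin := rfl
      _ ≤ ε * 1 := by nlinarith
      _ < 1 := by linarith
  set ξ : A1 → ℝ := fun b => (1 - γ) * (if b = a then 1 else 0) + γ * ξ' b with hξdef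
  have hξdist : IsDist ξ := by
    constructor
    · intro b
      have := hξ'nn b
      by_cases h : b = a <;> simp [hξdef, h] <;> nlinarith
    · simp [hξdef, Finset.sum_add_distrib, ← Finset.mul_sum, hξ'sum,
        Finset.sum_ite_eq' univ a (fun _ => (1:ℝ))]
  -- pure one-step probabilities
  have pure_nn : ∀ (b : A1) (a2 : A2) (T : Finset St), 0 ≤ ∑ t ∈ T, δ b a2 t := by
    intro b a2 T; exact Finset.sum_nonneg fun t _ => hδnn b a2 t
  have pure_compl : ∀ (b : A1) (a2 : A2) (T : Finset St),
      ∑ t ∈ T, δ b a2 t + ∑ t ∈ Tᶜ, δ b a2 t = 1 := by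
    intro b a2 T
    rw [Finset.sum_add_sum_compl]; exact hδsum b a2
  have pure_le_one : ∀ (b : A1) (a2 : A2) (T : Finset St), ∑ t ∈ T, δ b a2 t ≤ 1 := by
    intro b a2 T
    have := pure_compl b a2 T
    have := pure_nn b a2 Tᶜ
    linarith
  have stepP_nn : ∀ (χ : A1 → ℝ) (_ : ∀ b, 0 ≤ χ b) (a2 : A2) (T : Finset St),
      0 ≤ stepP δ χ a2 T := by
    intro χ hχ a2 T
    rw [stepP_eq']
    exact Finset.sum_nonneg fun b _ => mul_nonneg (hχ b) (pure_nn b a2 T)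
  have stepP_le_one : ∀ (χ : A1 → ℝ) (_ : IsDist χ) (a2 : A2) (T : Finset St),
      stepP δ χ a2 T ≤ 1 := by
    intro χ hχ a2 T
    rw [stepP_eq']
    calc ∑ b, χ b * ∑ t ∈ T, δ b a2 t ≤ ∑ b, χ b * 1 :=
          Finset.sum_le_sum fun b _ =>
            mul_le_mul_of_nonneg_left (pure_le_one b a2 T) (hχ.1 b)
      _ = 1 := by simp [hχ.2]
  have stepP_compl : ∀ (χ : A1 → ℝ) (_ : IsDist χ) (a2 : A2) (T : Finset St),
      stepP δ χ a2 Tᶜ = 1 - stepP δ χ a2 T := by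
    intro χ hχ a2 T
    rw [stepP_eq', stepP_eq']
    have : ∑ b, χ b * ∑ t ∈ T, δ b a2 t + ∑ b, χ b * ∑ t ∈ Tᶜ, δ b a2 t = 1 := by
      rw [← Finset.sum_add_distrib]
      calc ∑ b, (χ b * ∑ t ∈ T, δ b a2 t + χ b * ∑ t ∈ Tᶜ, δ b a2 t)
          = ∑ b, χ b * 1 := by
            apply Finset.sum_congr rfl
            intro b _
            rw [← mul_add, pure_compl b a2 T]
        _ = 1 := by simp [hχ.2]
    linarith
  -- key: if stepP ξ' T < δmin / m then the pure action a puts zero mass on T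
  have key : ∀ (a2 : A2) (T : Finset St), stepP δ ξ' a2 T < δmin / m →
      ∑ t ∈ T, δ a a2 t = 0 := by
    intro a2 T hT
    by_contra h
    have hpos : 0 < ∑ t ∈ T, δ a a2 t := lt_of_le_of_ne (pure_nn a a2 T) (Ne.symm h)
    obtain ⟨t, htT, htpos⟩ : ∃ t ∈ T, 0 < δ a a2 t := by
      by_contra hc
      push_neg at hc
      have : ∑ t ∈ T, δ a a2 t = 0 := Finset.sum_eq_zero fun t ht =>
        le_antisymm (hc t ht) (hδnn a a2 t)
      exact h this
    have h1 : δmin ≤ ∑ t ∈ T, δ a a2 t := by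
      calc δmin ≤ δ a a2 t := hδminlb a a2 t htpos
        _ ≤ ∑ t ∈ T, δ a a2 t :=
          Finset.single_le_sum (fun s _ => hδnn a a2 s) htT
    have h2 : ξ' a * ∑ t ∈ T, δ a a2 t ≤ stepP δ ξ' a2 T := by
      rw [stepP_eq']
      exact Finset.single_le_sum
        (fun b _ => mul_nonneg (hξ'nn b) (pure_nn b a2 T)) (mem_univ a)
    have h3 : δmin / m ≤ ξ' a * ∑ t ∈ T, δ a a2 t := by
      calc δmin / m = (1 / m) * δmin := by ring
        _ ≤ ξ' a * δmin := by nlinarith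
        _ ≤ ξ' a * ∑ t ∈ T, δ a a2 t := by nlinarith
    linarith
  refine ⟨a, ξ, hξdist, ?_, ?_⟩
  · have : ξ a = (1 - γ) + γ * ξ' a := by simp [hξdef]
    rw [this]
    have := hξ'nn a
    nlinarith
  · intro a2
    have hmix : ∀ T : Finset St,
        stepP δ ξ a2 T = (1 - γ) * (∑ t ∈ T, δ a a2 t) + γ * stepP δ ξ' a2 T :=
      fun T => stepP_mix' δ ξ' a a2 T (1 - γ) γ
    have hstep'nn : ∀ T, 0 ≤ stepP δ ξ' a2 T := fun T => stepP_nn ξ' hξ'nn a2 T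
    rcases hcond' a2 with h1 | ⟨hX, hY⟩ | ⟨hX, hRew, hZ⟩
    · -- Eq1
      left
      have hU1 : stepP δ ξ' a2 U ≤ 1 := stepP_le_one ξ' ⟨hξ'nn, hξ'sum⟩ a2 U
      have hWsmall : stepP δ ξ' a2 Wᶜ < δmin / m := by
        calc stepP δ ξ' a2 Wᶜ < ε * stepP δ ξ' a2 U := h1
          _ ≤ ε * 1 := by nlinarith [hstep'nn U]
          _ < δmin / m := by linarith
      have haW : ∑ t ∈ Wᶜ, δ a a2 t = 0 := key a2 Wᶜ hWsmall
      have e1 : stepP δ ξ a2 Wᶜ = γ * stepP δ ξ' a2 Wᶜ := by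
        rw [hmix Wᶜ, haW]; ring
      have e2 : γ * stepP δ ξ' a2 U ≤ stepP δ ξ a2 U := by
        rw [hmix U]
        nlinarith [pure_nn a a2 U]
      calc stepP δ ξ a2 Wᶜ = γ * stepP δ ξ' a2 Wᶜ := e1
        _ < γ * (ε * stepP δ ξ' a2 U) := by
            apply mul_lt_mul_of_pos_left h1 hγ0
        _ = ε * (γ * stepP δ ξ' a2 U) := by ring
        _ ≤ ε * stepP δ ξ a2 U := by nlinarith
    · -- Eq2
      right; left
      have hXc : stepP δ ξ' a2 Xᶜ = 0 := by
        rw [stepP_compl ξ' ⟨hξ'nn, hξ'sum⟩ a2 X, hX]; ring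
      have haXc : ∑ t ∈ Xᶜ, δ a a2 t = 0 := by
        apply key a2 Xᶜ
        rw [hXc]; positivity
      have haX : ∑ t ∈ X, δ a a2 t = 1 := by
        have := pure_compl a a2 X
        linarith
      constructor
      · rw [hmix X, haX, hX]; ring
      · rw [hmix Y]
        nlinarith [pure_nn a a2 Y]
    · -- Eq3
      right; right
      have hXc : stepP δ ξ' a2 Xᶜ = 0 := by
        rw [stepP_compl ξ' ⟨hξ'nn, hξ'sum⟩ a2 X, hX]; ring
      have haXc : ∑ t ∈ Xᶜ, δ a a2 t = 0 := by
        apply key a2 Xᶜ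
        rw [hXc]; positivity
      have haX : ∑ t ∈ X, δ a a2 t = 1 := by
        have := pure_compl a a2 X
        linarith
      have hZc : stepP δ ξ' a2 Zᶜ < δmin / m := by
        rw [stepP_compl ξ' ⟨hξ'nn, hξ'sum⟩ a2 Z]
        linarith
      have haZc : ∑ t ∈ Zᶜ, δ a a2 t = 0 := key a2 Zᶜ hZc
      have haZ : ∑ t ∈ Z, δ a a2 t = 1 := by
        have := pure_compl a a2 Z
        linarith
      have hra : r a a2 = 1 := by
        rcases hr01 a a2 with h0 | h1
        · exfalso
          have hrle : ∀ b, r b a2 ≤ 1 := by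
            intro b; rcases hr01 b a2 with h | h <;> simp [h]
          have hrnn : ∀ b, 0 ≤ r b a2 := by
            intro b; rcases hr01 b a2 with h | h <;> simp [h]
          have : expRew r ξ' a2 ≤ 1 - ξ' a := by
            unfold expRew
            rw [← Finset.add_sum_erase univ (fun b => ξ' b * r b a2) (mem_univ a), h0]
            have h5 : ∑ b ∈ univ.erase a, ξ' b * r b a2 ≤ ∑ b ∈ univ.erase a, ξ' b :=
              Finset.sum_le_sum fun b _ => by nlinarith [hξ'nn b, hrle b, hrnn b]
            have h6 : ∑ b ∈ univ.erase a, ξ' b = 1 - ξ' a := by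
              have := Finset.add_sum_erase univ ξ' (mem_univ a)
              rw [hξ'sum] at this
              linarith
            linarith [h5, h6.le]
          have : (1:ℝ) - ε ≤ 1 - 1/m := by linarith
          have : (1:ℝ)/m ≤ ε := by linarith
          linarith
        · exact h1
      refine ⟨by rw [hmix X, haX, hX]; ring, ?_, ?_⟩
      · have := expRew_mix' r ξ' a a2 (1 - γ) γ
        rw [show expRew r ξ a2 = (1-γ) * r a a2 + γ * expRew r ξ' a2 from this, hra]
        nlinarith
      · rw [hmix Z, haZ]
        nlinarith
end

section
/- Let a ∈ A₁ and suppose that for every a₂ ∈ A₂ at least one of the following holds: (i) δ(a,a₂,t) = 0 for all t ∈ S∖W and δ(a,a₂,t) > 0 for some t ∈ U; (ii) δ(a,a₂,t) = 0 for all t ∈ S∖X and δ(a,a₂,t) > 0 for some t ∈ Y; (iii) δ(a,a₂,t) = 0 for all t ∈ S∖Z and r(a,a₂) = 1. Then for every real ε with 0 < ε < 1/2, the Dirac distribution ξ_a on A₁ (ξ_a(a) = 1 and ξ_a(a₁) = 0 for a₁ ≠ a) is such that (ξ_a, a₂) satisfies the LimAvgPre condition at level ε for every a₂ ∈ A₂.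 (Correctness of the algorithm's Accept 1 case.) -/
open Finset

lemma stepP_dirac {A1 A2 St : Type*} [Fintype A1] [DecidableEq A1]
    (δ : A1 → A2 → St → ℝ) (a : A1) (a2 : A2) (T : Finset St) :
    stepP δ (fun a1 => if a1 = a then (1:ℝ) else 0) a2 T = ∑ t ∈ T, δ a a2 t := by
  unfold stepP
  rw [Finset.sum_eq_single a]
  · simp
  · intro b _ hb; simp [hb]
  · simp

lemma sum_subset_one {St : Type*} [Fintype St] (f : St → ℝ) (T : Finset St)
    (hsum : ∑ t, f t = 1) (h0 : ∀ t, t ∉ T → f t = 0) :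
    ∑ t ∈ T, f t = 1 := by
  rw [← hsum]
  exact (Finset.sum_subset (Finset.subset_univ T) (fun t _ ht => h0 t ht))

/-- correctness of the Accept 1 case — the Dirac distribution
on `a` is a witness for every `0 < ε < 1/2`. -/
theorem stmt_2 {A1 A2 St : Type*} [Fintype A1] [Fintype A2] [Fintype St]
    [DecidableEq A1] [DecidableEq St] [Nonempty A1] [Nonempty A2]
    (δ : A1 → A2 → St → ℝ) (r : A1 → A2 → ℝ) (δmin : ℝ)
    (hδnn : ∀ a1 a2 t, 0 ≤ δ a1 a2 t)
    (hδsum : ∀ a1 a2, ∑ t, δ a1 a2 t = 1)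
    (hr01 : ∀ a1 a2, r a1 a2 = 0 ∨ r a1 a2 = 1)
    (hδmin0 : 0 < δmin) (hδminle : δmin ≤ 1)
    (hδminlb : ∀ a1 a2 t, 0 < δ a1 a2 t → δmin ≤ δ a1 a2 t)
    (W U X Y Z : Finset St)
    (hUY : U ⊆ Y) (hYZ : Y ⊆ Z) (hZX : Z ⊆ X) (hXW : X ⊆ W)
    (a : A1)
    (ha : ∀ a2 : A2,
      ((∀ t, t ∉ W → δ a a2 t = 0) ∧ ∃ t ∈ U, 0 < δ a a2 t)
      ∨ ((∀ t, t ∉ X → δ a a2 t = 0) ∧ ∃ t ∈ Y, 0 < δ a a2 t)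
      ∨ ((∀ t, t ∉ Z → δ a a2 t = 0) ∧ r a a2 = 1)) :
    ∀ ε : ℝ, 0 < ε → ε < 1/2 →
      ∀ a2 : A2,
        LimAvgPreCond δ r W U X Y Z ε (fun a1 => if a1 = a then 1 else 0) a2 := by
  
  intro ε hε hε2 a2
  have hd := stepP_dirac δ a a2
  rcases ha a2 with ⟨h0, t, htU, htpos⟩ | ⟨h0, t, htY, htpos⟩ | ⟨h0, hr⟩
  · left
    have h1 : stepP δ (fun a1 => if a1 = a then (1:ℝ) else 0) a2 Wᶜ = 0 := by
      rw [hd]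
      exact Finset.sum_eq_zero (fun t ht => h0 t (Finset.mem_compl.mp ht))
    have h2 : 0 < stepP δ (fun a1 => if a1 = a then (1:ℝ) else 0) a2 U := by
      rw [hd]
      exact Finset.sum_pos' (fun s _ => hδnn a a2 s) ⟨t, htU, htpos⟩
    rw [h1]; positivity
  · right; left
    constructor
    · rw [hd]; exact sum_subset_one _ _ (hδsum a a2) h0
    · rw [hd]
      exact Finset.sum_pos' (fun s _ => hδnn a a2 s) ⟨t, htY, htpos⟩
  · right; right
    have hX : stepP δ (fun a1 => if a1 = a then (1:ℝ) else 0) a2 X = 1 := by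
      rw [hd]
      exact sum_subset_one _ _ (hδsum a a2) (fun t ht => h0 t (fun h => ht (hZX h)))
    refine ⟨hX, ?_, ?_⟩
    · have : expRew r (fun a1 => if a1 = a then (1:ℝ) else 0) a2 = r a a2 := by
        unfold expRew
        rw [Finset.sum_eq_single a]
        · simp
        · intro b _ hb; simp [hb]
        · simp
      rw [this, hr]; linarith
    · have : stepP δ (fun a1 => if a1 = a then (1:ℝ) else 0) a2 Z = 1 := by
        rw [hd]; exact sum_subset_one _ _ (hδsum a a2) h0
      rw [this]; linarith
end

section
/- Let a ∈ A₁, let ε be a real with 0 < ε < 1/2, let ξ₀ be a distribution on A₁, and define ξ : A₁ → ℝ by ξ(a₁) = (1 − ε·δmin)·[a₁ = a] + ε·δmin·ξ₀(a₁); then ξ is a distribution on A₁ and for every a₂ ∈ A₂: (1) if δ(a,a₂,t) = 0 for all t ∈ S∖W and δ(a,a₂,t) > 0 for some t ∈ U, then 2ε·δ(ξ,a₂)(U) > δ(ξ,a₂)(S∖W); (2) if δ(a₁,a₂,t) = 0 for every a₁ with ξ(a₁) > 0 and every t ∈ S∖X, and δ(a₁,a₂,t) > 0 for some a₁ with ξ(a₁)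 > 0 and some t ∈ Y, then δ(ξ,a₂)(X) = 1 and δ(ξ,a₂)(Y) > 0; (3) if δ(a₁,a₂,t) = 0 for every a₁ with ξ(a₁) > 0 and every t ∈ S∖X, δ(a,a₂,t) = 0 for all t ∈ S∖Z, and r(a,a₂) = 1, then δ(ξ,a₂)(X) = 1, ExpRew(ξ,a₂) ≥ 1−ε and δ(ξ,a₂)(Z) ≥ 1−ε. (The three verification cases in the Accept 2 part of the correctness proof of the predecessor algorithm.) -/
open Finset

/-- the three verification cases in the Accept 2 part of the
correctness proof of the predecessor algorithm. -/
theorem stmt_5 {A1 A2 St : Type*} [Fintype A1] [Fintype A2] [Fintype St]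
    [DecidableEq A1] [DecidableEq St] [Nonempty A1] [Nonempty A2]
    (δ : A1 → A2 → St → ℝ) (r : A1 → A2 → ℝ) (δmin : ℝ)
    (hδnn : ∀ a1 a2 t, 0 ≤ δ a1 a2 t)
    (hδsum : ∀ a1 a2, ∑ t, δ a1 a2 t = 1)
    (hr01 : ∀ a1 a2, r a1 a2 = 0 ∨ r a1 a2 = 1)
    (hδmin0 : 0 < δmin) (hδminle : δmin ≤ 1)
    (hδminlb : ∀ a1 a2 t, 0 < δ a1 a2 t → δmin ≤ δ a1 a2 t)
    (W U X Y Z : Finset St)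
    (hUY : U ⊆ Y) (hYZ : Y ⊆ Z) (hZX : Z ⊆ X) (hXW : X ⊆ W)
    (a : A1) (ε : ℝ) (hε0 : 0 < ε) (hεhalf : ε < 1/2)
    (ξ0 : A1 → ℝ) (hξ0 : IsDist ξ0)
    (ξ : A1 → ℝ)
    (hξdef : ξ = fun a1 =>
      (1 - ε * δmin) * (if a1 = a then 1 else 0) + ε * δmin * ξ0 a1) :
    IsDist ξ ∧ ∀ a2 : A2,
      (((∀ t, t ∉ W → δ a a2 t = 0) ∧ ∃ t ∈ U, 0 < δ a a2 t) →
        stepP δ ξ a2 Wᶜ < (2 * ε) * stepP δ ξ a2 U) ∧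
      (((∀ a1, 0 < ξ a1 → ∀ t, t ∉ X → δ a1 a2 t = 0) ∧
          (∃ a1, 0 < ξ a1 ∧ ∃ t ∈ Y, 0 < δ a1 a2 t)) →
        stepP δ ξ a2 X = 1 ∧ 0 < stepP δ ξ a2 Y) ∧
      (((∀ a1, 0 < ξ a1 → ∀ t, t ∉ X → δ a1 a2 t = 0) ∧
          (∀ t, t ∉ Z → δ a a2 t = 0) ∧ r a a2 = 1) →
        stepP δ ξ a2 X = 1 ∧ 1 - ε ≤ expRew r ξ a2 ∧ 1 - ε ≤ stepP δ ξ a2 Z) := by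
  have hεδ0 : 0 < ε * δmin := mul_pos hε0 hδmin0
  have hεδle : ε * δmin ≤ ε := by nlinarith
  have hεδlt : ε * δmin < 1/2 := lt_of_le_of_lt hεδle hεhalf
  have hξnn : ∀ a1, 0 ≤ ξ a1 := by
    intro a1; rw [hξdef]; dsimp only
    have := hξ0.1 a1
    split <;> nlinarith
  have hξsum : ∑ a1, ξ a1 = 1 := by
    rw [hξdef]
    rw [Finset.sum_add_distrib, ← Finset.mul_sum, ← Finset.mul_sum,
      Finset.sum_ite_eq' univ a (fun _ => (1:ℝ)), hξ0.2]
    simp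
  have hξa : 1 - ε * δmin ≤ ξ a := by
    have h : ξ a = 1 - ε * δmin + ε * δmin * ξ0 a := by rw [hξdef]; simp
    have := hξ0.1 a; nlinarith
  have hξne : ∀ a1, a1 ≠ a → ξ a1 = ε * δmin * ξ0 a1 := by
    intro a1 h; rw [hξdef]; dsimp only; rw [if_neg h]; ring
  have hrow_nn : ∀ a1 (a2 : A2) (T : Finset St), 0 ≤ ∑ t ∈ T, δ a1 a2 t :=
    fun a1 a2 T => Finset.sum_nonneg fun t _ => hδnn a1 a2 t
  have hrow_le1 : ∀ a1 (a2 : A2) (T : Finset St), ∑ t ∈ T, δ a1 a2 t ≤ 1 := by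
    intro a1 a2 T
    rw [← hδsum a1 a2]
    exact Finset.sum_le_sum_of_subset_of_nonneg (Finset.subset_univ T)
      (fun t _ _ => hδnn a1 a2 t)
  have key : ∀ (a2 : A2) (T : Finset St),
      stepP δ ξ a2 T = ∑ a1, ξ a1 * ∑ t ∈ T, δ a1 a2 t := by
    intro a2 T; unfold stepP; simp [Finset.mul_sum]
  -- row = 1 when the support is inside T
  have hrow_full : ∀ a1 (a2 : A2) (T : Finset St),
      (∀ t, t ∉ T → δ a1 a2 t = 0) → ∑ t ∈ T, δ a1 a2 t = 1 := by
    intro a1 a2 T h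
    rw [← hδsum a1 a2]
    exact Finset.sum_subset (Finset.subset_univ T) (fun t _ ht => h t ht)
  have hstepX : ∀ (a2 : A2), (∀ a1, 0 < ξ a1 → ∀ t, t ∉ X → δ a1 a2 t = 0) →
      stepP δ ξ a2 X = 1 := by
    intro a2 h
    rw [key, ← hξsum]
    apply Finset.sum_congr rfl
    intro a1 _
    rcases (hξnn a1).eq_or_lt with h0 | hpos
    · rw [← h0]; ring
    · rw [hrow_full a1 a2 X (h a1 hpos), mul_one]
  refine ⟨⟨hξnn, hξsum⟩, fun a2 => ⟨?_, ?_, ?_⟩⟩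
  · rintro ⟨hW, t, htU, htpos⟩
    -- upper bound on stepP Wᶜ
    have h1 : stepP δ ξ a2 Wᶜ ≤ ε * δmin := by
      rw [key]
      have hz : ξ a * ∑ t ∈ Wᶜ, δ a a2 t = 0 := by
        have : ∑ t ∈ Wᶜ, δ a a2 t = 0 :=
          Finset.sum_eq_zero fun t ht => hW t (Finset.mem_compl.mp ht)
        rw [this, mul_zero]
      rw [← Finset.sum_erase_add univ _ (Finset.mem_univ a), hz, add_zero]
      calc ∑ a1 ∈ univ.erase a, ξ a1 * ∑ t ∈ Wᶜ, δ a1 a2 t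
          ≤ ∑ a1 ∈ univ.erase a, ε * δmin * ξ0 a1 := by
            apply Finset.sum_le_sum
            intro a1 ha1
            rw [hξne a1 (Finset.ne_of_mem_erase ha1)]
            have := mul_nonneg hεδ0.le (hξ0.1 a1)
            nlinarith [hrow_le1 a1 a2 Wᶜ, hrow_nn a1 a2 Wᶜ]
        _ = ε * δmin * ∑ a1 ∈ univ.erase a, ξ0 a1 := by rw [Finset.mul_sum]
        _ ≤ ε * δmin * 1 := by
            apply mul_le_mul_of_nonneg_left _ hεδ0.le
            rw [← hξ0.2]
            exact Finset.sum_le_sum_of_subset_of_nonneg (Finset.erase_subset _ _)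
              (fun a1 _ _ => hξ0.1 a1)
        _ = ε * δmin := mul_one _
    -- lower bound on stepP U
    have h2 : (1 - ε * δmin) * δmin ≤ stepP δ ξ a2 U := by
      rw [key]
      have hrow : δmin ≤ ∑ t ∈ U, δ a a2 t := by
        calc δmin ≤ δ a a2 t := hδminlb a a2 t htpos
          _ ≤ ∑ t ∈ U, δ a a2 t :=
            Finset.single_le_sum (fun s _ => hδnn a a2 s) htU
      calc (1 - ε * δmin) * δmin ≤ ξ a * ∑ t ∈ U, δ a a2 t := by nlinarith
        _ ≤ ∑ a1, ξ a1 * ∑ t ∈ U, δ a1 a2 t :=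
          Finset.single_le_sum
            (fun a1 _ => mul_nonneg (hξnn a1) (hrow_nn a1 a2 U))
            (Finset.mem_univ a)
    nlinarith
  · rintro ⟨hX, a1, ha1pos, t, htY, htpos⟩
    refine ⟨hstepX a2 hX, ?_⟩
    rw [key]
    apply Finset.sum_pos' (fun b _ => mul_nonneg (hξnn b) (hrow_nn b a2 Y))
    refine ⟨a1, Finset.mem_univ a1, ?_⟩
    have : 0 < ∑ t ∈ Y, δ a1 a2 t :=
      lt_of_lt_of_le htpos (Finset.single_le_sum (fun s _ => hδnn a1 a2 s) htY)
    exact mul_pos ha1pos this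
  · rintro ⟨hX, hZ, hra⟩
    refine ⟨hstepX a2 hX, ?_, ?_⟩
    · unfold expRew
      have : ξ a * r a a2 ≤ ∑ a1, ξ a1 * r a1 a2 := by
        apply Finset.single_le_sum _ (Finset.mem_univ a)
        intro a1 _
        rcases hr01 a1 a2 with h | h <;> rw [h] <;> [simp; simpa using hξnn a1]
      rw [hra, mul_one] at this
      nlinarith
    · rw [key]
      have hrow : ∑ t ∈ Z, δ a a2 t = 1 := hrow_full a a2 Z hZ
      have : ξ a * ∑ t ∈ Z, δ a a2 t ≤ ∑ a1, ξ a1 * ∑ t ∈ Z, δ a1 a2 t :=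
        Finset.single_le_sum
          (fun a1 _ => mul_nonneg (hξnn a1) (hrow_nn a1 a2 Z))
          (Finset.mem_univ a)
      rw [hrow, mul_one] at this
      nlinarith
end

section
/- Let a ∈ A₁ and B ⊆ A₁∖{a}. Suppose that for every a₁ ∈ B there exists a₂ ∈ A₂ such that δ(a₁,a₂,t) > 0 for some t ∈ S∖W, and δ(a,a₂,t) = 0 for all t ∈ U. Then for every real ε with 0 < ε ≤ δmin/|A₁| and every distribution ξ on A₁ with ξ(a₁) = 0 for all a₁ ∉ B ∪ {a} and ξ(a) < 1, there exists a₂ ∈ A₂ such that (ξ, a₂) does not satisfy the LimAvgPre condition at level ε. (Soundness of the Reject 2 case of the predecessor algorithm.) -/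
open Finset

/-- soundness of the Reject 2 case of the predecessor algorithm. -/
theorem stmt_6 {A1 A2 St : Type*} [Fintype A1] [Fintype A2] [Fintype St]
    [DecidableEq A1] [DecidableEq St] [Nonempty A1] [Nonempty A2]
    (δ : A1 → A2 → St → ℝ) (r : A1 → A2 → ℝ) (δmin : ℝ)
    (hδnn : ∀ a1 a2 t, 0 ≤ δ a1 a2 t)
    (hδsum : ∀ a1 a2, ∑ t, δ a1 a2 t = 1)
    (hr01 : ∀ a1 a2, r a1 a2 = 0 ∨ r a1 a2 = 1)
    (hδmin0 : 0 < δmin) (hδminle : δmin ≤ 1)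
    (hδminlb : ∀ a1 a2 t, 0 < δ a1 a2 t → δmin ≤ δ a1 a2 t)
    (W U X Y Z : Finset St)
    (hUY : U ⊆ Y) (hYZ : Y ⊆ Z) (hZX : Z ⊆ X) (hXW : X ⊆ W)
    (a : A1) (B : Finset A1) (haB : a ∉ B)
    (hB : ∀ a1 ∈ B, ∃ a2 : A2,
      (∃ t, t ∉ W ∧ 0 < δ a1 a2 t) ∧ (∀ t ∈ U, δ a a2 t = 0)) :
    ∀ ε : ℝ, 0 < ε → ε ≤ δmin / (Fintype.card A1) →
      ∀ ξ : A1 → ℝ, IsDist ξ →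
        (∀ a1, a1 ∉ insert a B → ξ a1 = 0) → ξ a < 1 →
        ∃ a2 : A2, ¬ LimAvgPreCond δ r W U X Y Z ε ξ a2 := by
  intro ε hε0 hεle ξ hξd hsupp hξa
  obtain ⟨hξnn, hξsum⟩ := hξd
  have hsum_split : ξ a + ∑ x ∈ B, ξ x = 1 := by
    rw [← hξsum, ← Finset.sum_insert haB]
    exact Finset.sum_subset (Finset.subset_univ _) (fun x _ hx => hsupp x hx)
  have hsB : 0 < ∑ x ∈ B, ξ x := by linarith
  have hBne : B.Nonempty := Finset.nonempty_of_ne_empty (by rintro rfl; simp at hsB)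
  obtain ⟨b, hbB, hbmax⟩ := Finset.exists_max_image B ξ hBne
  have hξbnn := hξnn b
  have hcardB : (B.card : ℝ) ≤ Fintype.card A1 := by
    exact_mod_cast Finset.card_le_card (Finset.subset_univ B)
  have hξb : ∑ x ∈ B, ξ x ≤ B.card * ξ b := by
    calc ∑ x ∈ B, ξ x ≤ ∑ _x ∈ B, ξ b := Finset.sum_le_sum fun x hx => hbmax x hx
      _ = B.card * ξ b := by rw [Finset.sum_const, nsmul_eq_mul]
  have hξb0 : 0 < ξ b := by nlinarith
  obtain ⟨a2, ⟨t0, ht0W, ht0pos⟩, hU0⟩ := hB b hbB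
  refine ⟨a2, ?_⟩
  have ht0c : t0 ∈ Wᶜ := Finset.mem_compl.mpr ht0W
  have hgnn : ∀ T : Finset St, ∀ a1 : A1, 0 ≤ ∑ t ∈ T, ξ a1 * δ a1 a2 t :=
    fun T a1 => Finset.sum_nonneg fun t _ => mul_nonneg (hξnn a1) (hδnn a1 a2 t)
  have hWc : δmin * ξ b ≤ stepP δ ξ a2 Wᶜ := by
    have h1 : ξ b * δ b a2 t0 ≤ ∑ t ∈ Wᶜ, ξ b * δ b a2 t :=
      Finset.single_le_sum (fun t _ => mul_nonneg hξbnn (hδnn b a2 t)) ht0c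
    have h2 : ∑ t ∈ Wᶜ, ξ b * δ b a2 t ≤ stepP δ ξ a2 Wᶜ :=
      Finset.single_le_sum (f := fun a1 => ∑ t ∈ Wᶜ, ξ a1 * δ a1 a2 t)
        (fun a1 _ => hgnn _ a1) (Finset.mem_univ b)
    have h3 : δmin ≤ δ b a2 t0 := hδminlb b a2 t0 ht0pos
    nlinarith
  have hU : stepP δ ξ a2 U ≤ ∑ x ∈ B, ξ x := by
    have hrw : ∑ x ∈ B, ξ x = ∑ a1, if a1 ∈ B then ξ a1 else 0 := by
      rw [Finset.sum_ite_mem, Finset.univ_inter]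
    rw [hrw]
    apply Finset.sum_le_sum
    intro a1 _
    by_cases h1 : a1 ∈ B
    · simp only [h1, if_true]
      calc ∑ t ∈ U, ξ a1 * δ a1 a2 t = ξ a1 * ∑ t ∈ U, δ a1 a2 t := by
            rw [Finset.mul_sum]
        _ ≤ ξ a1 * 1 := by
            apply mul_le_mul_of_nonneg_left _ (hξnn a1)
            rw [← hδsum a1 a2]
            exact Finset.sum_le_sum_of_subset_of_nonneg (Finset.subset_univ U)
              (fun t _ _ => hδnn a1 a2 t)
        _ = ξ a1 := mul_one _
    · simp only [h1, if_false]
      by_cases h2 : a1 = a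
      · subst h2
        exact le_of_eq (Finset.sum_eq_zero fun t ht => by rw [hU0 t ht, mul_zero])
      · have hz : ξ a1 = 0 := hsupp a1 (by simp [h1, h2])
        exact le_of_eq (Finset.sum_eq_zero fun t _ => by rw [hz, zero_mul])
  have huniv : stepP δ ξ a2 (Finset.univ : Finset St) = 1 := by
    unfold stepP
    calc ∑ a1, ∑ t, ξ a1 * δ a1 a2 t = ∑ a1, ξ a1 * ∑ t, δ a1 a2 t := by
          simp [Finset.mul_sum]
      _ = ∑ a1, ξ a1 := by simp [hδsum]
      _ = 1 := hξsum
  have hsplit : stepP δ ξ a2 X + stepP δ ξ a2 Xᶜ = 1 := by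
    rw [← huniv]
    unfold stepP
    rw [← Finset.sum_add_distrib]
    exact Finset.sum_congr rfl fun a1 _ => Finset.sum_add_sum_compl X _
  have hWXc : stepP δ ξ a2 Wᶜ ≤ stepP δ ξ a2 Xᶜ :=
    Finset.sum_le_sum fun a1 _ =>
      Finset.sum_le_sum_of_subset_of_nonneg (Finset.compl_subset_compl.mpr hXW)
        (fun t _ _ => mul_nonneg (hξnn a1) (hδnn a1 a2 t))
  have hδξ : 0 < δmin * ξ b := by positivity
  have hX1 : stepP δ ξ a2 X < 1 := by linarith
  have hcard0 : (0:ℝ) < Fintype.card A1 := by exact_mod_cast Fintype.card_pos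
  rintro (h | ⟨hX, -⟩ | ⟨hX, -⟩)
  · have h1 : stepP δ ξ a2 U ≤ (Fintype.card A1 : ℝ) * ξ b := by nlinarith
    have h2 : 0 ≤ stepP δ ξ a2 U := Finset.sum_nonneg fun a1 _ => hgnn U a1
    have h3 : ε * stepP δ ξ a2 U ≤ (δmin / Fintype.card A1) * ((Fintype.card A1 : ℝ) * ξ b) :=
      mul_le_mul hεle h1 h2 (le_of_lt (div_pos hδmin0 hcard0))
    have h4 : (δmin / Fintype.card A1) * ((Fintype.card A1 : ℝ) * ξ b) = δmin * ξ b := by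
      field_simp
    linarith
  · linarith
  · linarith
end

section
/- Let A₁, A₂ be finite sets, S a finite set, Succ : A₁ → A₂ → Set(S) a function, and U ⊆ W ⊆ S. On the complete lattice of pairs (B₁, B₂) with B₁ ⊆ A₁ and B₂ ⊆ A₂, ordered componentwise by inclusion, define F(B₁, B₂) = (Stay(B₂), Cover(B₁)), where Stay(B₂) = {a₁ ∈ A₁ : for all a₂ ∈ A₂∖B₂, Succ(a₁,a₂) ⊆ W} and Cover(B₁) = {a₂ ∈ A₂ : there exists a₁ ∈ B₁ with Succ(a₁,a₂) ∩ U ≠ ∅}. Then F is monotone; and if its least fixed point (B₁*, B₂*) satisfies B₁* = ∅, then B₂* = ∅ and for every a₁ ∈ A₁ there exists a₂ ∈ A₂ with Succ(a₁,a₂) ∩ (S∖W) ≠ ∅. (Reject property of the LPre computation in the technical appendix.) -/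
/-- reject property of the `LPre` computation.  The map
`F(B₁,B₂) = (Stay(B₂), Cover(B₁))` is monotone, and if its least fixed
point has empty first component then its second component is also empty and
every player-1 action can leave `W` against some player-2 action. -/
theorem stmt_8 {A1 A2 St : Type*}
    (Succ : A1 → A2 → Set St) (U W : Set St) (hUW : U ⊆ W)
    (Stay : Set A2 → Set A1) (Cover : Set A1 → Set A2)
    (hStay : ∀ B2 : Set A2, Stay B2 = {a1 | ∀ a2, a2 ∉ B2 → Succ a1 a2 ⊆ W})
    (hCover : ∀ B1 : Set A1,
      Cover B1 = {a2 | ∃ a1 ∈ B1, (Succ a1 a2 ∩ U).Nonempty})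
    (F : Set A1 × Set A2 → Set A1 × Set A2)
    (hFdef : ∀ B : Set A1 × Set A2, F B = (Stay B.2, Cover B.1)) :
    Monotone F ∧
      ∀ B1s : Set A1, ∀ B2s : Set A2,
        F (B1s, B2s) = (B1s, B2s) →
        (∀ C : Set A1 × Set A2, F C = C → (B1s, B2s) ≤ C) →
        B1s = ∅ →
        B2s = ∅ ∧ ∀ a1 : A1, ∃ a2 : A2, (Succ a1 a2 ∩ Wᶜ).Nonempty := by
  constructor
  · intro B C hBC
    rw [hFdef, hFdef]
    constructor
    · rw [hStay, hStay]
      intro a1 ha1 a2 ha2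
      exact ha1 a2 (fun h => ha2 (hBC.2 h))
    · rw [hCover, hCover]
      rintro a2 ⟨a1, ha1, hne⟩
      exact ⟨a1, hBC.1 ha1, hne⟩
  · intro B1s B2s hfix _ hB1
    rw [hFdef] at hfix
    have h1 : Stay B2s = B1s := congrArg Prod.fst hfix
    have h2 : Cover B1s = B2s := congrArg Prod.snd hfix
    have hB2 : B2s = ∅ := by
      rw [← h2, hCover, hB1]
      ext a2; simp
    refine ⟨hB2, fun a1 => ?_⟩
    have : a1 ∉ Stay B2s := by rw [h1, hB1]; exact Set.notMem_empty a1
    rw [hStay] at this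
    simp only [Set.mem_setOf_eq, not_forall] at this
    obtain ⟨a2, _, hnot⟩ := this
    obtain ⟨s, hs, hsW⟩ := Set.not_subset.mp hnot
    exact ⟨a2, s, hs, hsW⟩
end
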